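/- arXiv:0711.0763 — 2 statements merged into one kernel-verified Lean document; each statement's English description precedes it below -/
import Mathlib

section
/- Let μ be a partition of n, ζ a corner cell of μ, and ν = μ∖{ζ}. Then in ℚ(q,t) the Pieri coefficient c_{μν}(q,t) := ∏_{α∈Row(ζ)} (t^{l_μ(α)} − q^{a_μ(α)+1})/(t^{l_μ(α)} − q^{a_μ(α)}) · ∏_{α∈Col(ζ)} (q^{a_μ(α)} − t^{l_μ(α)+1})/(q^{a_μ(α)} − t^{l_μ(α)}) satisfies the identity c_{μν}(q,t) = Π_μ / Π_{μ,ν}. -/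
open MvPolynomial Finset

noncomputable section

/-- The field `ℚ(q,t)` of rational functions in two indeterminates over `ℚ`. -/
abbrev K : Type := FractionRing (MvPolynomial (Fin 2) ℚ)

/-- The indeterminate `q` in `ℚ(q,t)`. -/
def qq : K := algebraMap (MvPolynomial (Fin 2) ℚ) K (X 0)

/-- The indeterminate `t` in `ℚ(q,t)`. -/
def tt : K := algebraMap (MvPolynomial (Fin 2) ℚ) K (X 1)

/-- The arm `a_μ(i,j) = μ_{i+1} - 1 - j` of a cell of `μ` (as an integer). -/
def arm (μ : YoungDiagram) (c : ℕ × ℕ) : ℤ := (μ.rowLen c.1 : ℤ) - 1 - c.2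

/-- The leg of a cell of `μ` (as an integer). -/
def leg (μ : YoungDiagram) (c : ℕ × ℕ) : ℤ := (μ.colLen c.2 : ℤ) - 1 - c.1

/-- A corner cell of `μ`: a cell with arm and leg both zero. -/
def IsCornerCell (μ : YoungDiagram) (c : ℕ × ℕ) : Prop :=
  c ∈ μ ∧ arm μ c = 0 ∧ leg μ c = 0

/-- `Π_μ = ∏_{α∈μ} (1 - t^{1+l(α)} q^{-a(α)})(1 - t^{-l(α)} q^{1+a(α)})`. -/
def PiMu (μ : YoungDiagram) : K :=
  ∏ α ∈ μ.cells,
    ((1 - tt ^ (1 + leg μ α) * qq ^ (-(arm μ α))) *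
      (1 - tt ^ (-(leg μ α)) * qq ^ (1 + arm μ α)))

/-- `Π_{μ,ν} = (1-t)(1-q)·P₁·P₂·P₃` attached to a corner cell `ζ` of `μ`. -/
def PiMuNu (μ : YoungDiagram) (ζ : ℕ × ℕ) : K :=
  (1 - tt) * (1 - qq) *
    (∏ α ∈ μ.cells.filter (fun α => α.1 ≠ ζ.1 ∧ α.2 ≠ ζ.2),
      ((1 - tt ^ (1 + leg μ α) * qq ^ (-(arm μ α))) *
        (1 - tt ^ (-(leg μ α)) * qq ^ (1 + arm μ α)))) *
    (∏ α ∈ μ.cells.filter (fun α => α.1 = ζ.1 ∧ α ≠ ζ),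
      ((1 - tt ^ (1 + leg μ α) * qq ^ (-(arm μ α))) *
        (1 - tt ^ (-(leg μ α)) * qq ^ (arm μ α)))) *
    (∏ α ∈ μ.cells.filter (fun α => α.2 = ζ.2 ∧ α ≠ ζ),
      ((1 - tt ^ (-(leg μ α)) * qq ^ (1 + arm μ α)) *
        (1 - tt ^ (leg μ α) * qq ^ (-(arm μ α)))))

/-!
Split `Π_μ` over `ζ`, `Row(ζ)`, `Col(ζ)` and the remaining cells. The factor at `ζ` is
`(1 - t)(1 - q)`, and the remaining cells contribute the same factors to `Π_μ` and `Π_{μ,ν}`.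
For a cell of `Row(ζ)` with leg `l` and arm `a`, writing `1 - t^{-l} q^k = t^{-l} (t^l - q^k)`
shows that its factor in `Π_μ` is its factor in `Π_{μ,ν}` times `(t^l - q^{a+1})/(t^l - q^a)`;
symmetrically for `Col(ζ)`. Every factor involved is nonzero because a monomial `t^l q^a`
with `(l, a) ≠ (0, 0)` is not `1` in `ℚ(q,t)`.
-/

lemma algebraMap_injective_K : Function.Injective (algebraMap (MvPolynomial (Fin 2) ℚ) K) :=
  IsFractionRing.injective _ _

lemma tt_ne_zero : tt ≠ 0 :=
  (map_ne_zero_iff _ algebraMap_injective_K).mpr (X_ne_zero 1)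

lemma qq_ne_zero : qq ≠ 0 :=
  (map_ne_zero_iff _ algebraMap_injective_K).mpr (X_ne_zero 0)

lemma tt_pow_mul_qq_pow_inj {m k m' k' : ℕ} :
    tt ^ m * qq ^ k = tt ^ m' * qq ^ k' ↔ m = m' ∧ k = k' := by
  refine ⟨fun h => ?_, fun ⟨hm, hk⟩ => hm ▸ hk ▸ rfl⟩
  simp only [tt, qq, ← map_pow, ← map_mul] at h
  have h := algebraMap_injective_K h
  simp only [X_pow_eq_monomial, monomial_mul, mul_one,
    monomial_left_inj (one_ne_zero (α := ℚ))] at h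
  exact ⟨by simpa using DFunLike.congr_fun h 1, by simpa using DFunLike.congr_fun h 0⟩

lemma tt_zpow_mul_qq_zpow_eq_one_iff {l a : ℤ} : tt ^ l * qq ^ a = 1 ↔ l = 0 ∧ a = 0 := by
  refine ⟨fun h => ?_, fun ⟨hl, ha⟩ => by simp [hl, ha]⟩
  rw [← Int.toNat_sub_toNat_neg l, ← Int.toNat_sub_toNat_neg a,
    zpow_sub₀ tt_ne_zero, zpow_sub₀ qq_ne_zero] at h
  simp only [zpow_natCast] at h
  have hpos : tt ^ (-l).toNat * qq ^ (-a).toNat ≠ 0 := by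
    have := tt_ne_zero; have := qq_ne_zero; positivity
  rw [div_mul_div_comm, div_eq_one_iff_eq hpos, tt_pow_mul_qq_pow_inj] at h
  omega

lemma one_sub_tt_zpow_mul_qq_zpow_ne_zero {l a : ℤ} (h : l ≠ 0 ∨ a ≠ 0) :
    1 - tt ^ l * qq ^ a ≠ 0 := by
  rw [sub_ne_zero, ne_comm, Ne, tt_zpow_mul_qq_zpow_eq_one_iff]
  tauto

lemma tt_zpow_ne_qq_zpow {l a : ℤ} (h : l ≠ 0 ∨ a ≠ 0) : tt ^ l ≠ qq ^ a := by
  intro he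
  apply one_sub_tt_zpow_mul_qq_zpow_ne_zero (a := -a) (by simpa using h)
  rw [he, zpow_neg, mul_inv_cancel₀ (zpow_ne_zero _ qq_ne_zero), sub_self]

lemma div_mul_one_sub_zpow_neg_mul {F : Type*} [Field F] {x y : F} {m n : ℤ} (hx : x ≠ 0)
    (h : x ^ m ≠ y ^ n) :
    (x ^ m - y ^ (n + 1)) / (x ^ m - y ^ n) * (1 - x ^ (-m) * y ^ n) =
      1 - x ^ (-m) * y ^ (n + 1) := by
  have hxm : x ^ m ≠ 0 := zpow_ne_zero _ hx
  have hsub : x ^ m - y ^ n ≠ 0 := sub_ne_zero.mpr h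
  rw [zpow_neg]
  field_simp

def cellFactor (l a : ℤ) : K :=
  (1 - tt ^ (1 + l) * qq ^ (-a)) * (1 - tt ^ (-l) * qq ^ (1 + a))

def rowFactor (l a : ℤ) : K :=
  (1 - tt ^ (1 + l) * qq ^ (-a)) * (1 - tt ^ (-l) * qq ^ a)

def colFactor (l a : ℤ) : K :=
  (1 - tt ^ (-l) * qq ^ (1 + a)) * (1 - tt ^ l * qq ^ (-a))

lemma cellFactor_ne_zero {l a : ℤ} (hl : 0 ≤ l) (ha : 0 ≤ a) : cellFactor l a ≠ 0 :=
  mul_ne_zero (one_sub_tt_zpow_mul_qq_zpow_ne_zero (by omega))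
    (one_sub_tt_zpow_mul_qq_zpow_ne_zero (by omega))

lemma rowFactor_ne_zero {l a : ℤ} (hl : 0 ≤ l) (ha : a ≠ 0) : rowFactor l a ≠ 0 :=
  mul_ne_zero (one_sub_tt_zpow_mul_qq_zpow_ne_zero (by omega))
    (one_sub_tt_zpow_mul_qq_zpow_ne_zero (by omega))

lemma colFactor_ne_zero {l a : ℤ} (hl : l ≠ 0) (ha : 0 ≤ a) : colFactor l a ≠ 0 :=
  mul_ne_zero (one_sub_tt_zpow_mul_qq_zpow_ne_zero (by omega))
    (one_sub_tt_zpow_mul_qq_zpow_ne_zero (by omega))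

lemma cellFactor_zero_zero : cellFactor 0 0 = (1 - tt) * (1 - qq) := by
  simp [cellFactor]

lemma div_mul_rowFactor {l a : ℤ} (ha : a ≠ 0) :
    (tt ^ l - qq ^ (a + 1)) / (tt ^ l - qq ^ a) * rowFactor l a = cellFactor l a := by
  rw [rowFactor, cellFactor, mul_left_comm, add_comm 1 a,
    div_mul_one_sub_zpow_neg_mul tt_ne_zero (tt_zpow_ne_qq_zpow (Or.inr ha))]

lemma div_mul_colFactor {l a : ℤ} (hl : l ≠ 0) :
    (qq ^ a - tt ^ (l + 1)) / (qq ^ a - tt ^ l) * colFactor l a = cellFactor l a := by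
  rw [colFactor, cellFactor, mul_comm (tt ^ l), mul_comm (tt ^ (1 + l)), add_comm 1 l,
    mul_left_comm, div_mul_one_sub_zpow_neg_mul qq_ne_zero (tt_zpow_ne_qq_zpow (Or.inl hl)).symm,
    mul_comm]

lemma Finset.prod_eq_mul_prod_row_mul_prod_col_mul_prod_rest {ι κ M : Type*} [DecidableEq ι]
    [DecidableEq κ] [CommMonoid M] {s : Finset (ι × κ)} {z : ι × κ} (hz : z ∈ s)
    (g : ι × κ → M) :
    ∏ α ∈ s, g α =
      g z * (∏ α ∈ s.filter (fun α => α.1 = z.1 ∧ α ≠ z), g α) *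
        (∏ α ∈ s.filter (fun α => α.2 = z.2 ∧ α ≠ z), g α) *
        (∏ α ∈ s.filter (fun α => α.1 ≠ z.1 ∧ α.2 ≠ z.2), g α) := by
  rw [← Finset.mul_prod_erase s g hz,
    ← Finset.prod_filter_mul_prod_filter_not (s.erase z) (fun α => α.1 = z.1),
    ← Finset.prod_filter_mul_prod_filter_not ((s.erase z).filter (fun α => ¬α.1 = z.1))
      (fun α => α.2 = z.2)]
  simp only [mul_assoc]
  congr 2
  · congr 1
    ext α
    simp only [Finset.mem_filter, Finset.mem_erase]
    tauto
  · congr 1 <;> congr 1 <;> ext α <;>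
      simp only [Finset.mem_filter, Finset.mem_erase, ne_eq, Prod.ext_iff] <;> tauto

section YoungDiagram

variable {μ : YoungDiagram} {ζ α : ℕ × ℕ}

lemma arm_nonneg (h : α ∈ μ) : 0 ≤ arm μ α := by
  have := YoungDiagram.mem_iff_lt_rowLen.mp h
  simp only [arm]
  omega

lemma leg_nonneg (h : α ∈ μ) : 0 ≤ leg μ α := by
  have := YoungDiagram.mem_iff_lt_colLen.mp h
  simp only [leg]
  omega

lemma IsCornerCell.arm_ne_zero_of_row (hζ : IsCornerCell μ ζ) (h : α ∈ μ) (hrow : α.1 = ζ.1)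
    (hne : α ≠ ζ) : arm μ α ≠ 0 := by
  have hlt := YoungDiagram.mem_iff_lt_rowLen.mp h
  have hne2 : α.2 ≠ ζ.2 := fun e => hne (Prod.ext hrow e)
  have hζ0 := hζ.2.1
  simp only [arm] at hζ0 ⊢
  rw [hrow] at hlt ⊢
  omega

lemma IsCornerCell.leg_ne_zero_of_col (hζ : IsCornerCell μ ζ) (h : α ∈ μ) (hcol : α.2 = ζ.2)
    (hne : α ≠ ζ) : leg μ α ≠ 0 := by
  have hlt := YoungDiagram.mem_iff_lt_colLen.mp h
  have hne1 : α.1 ≠ ζ.1 := fun e => hne (Prod.ext e hcol)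
  have hζ0 := hζ.2.2
  simp only [leg] at hζ0 ⊢
  rw [hcol] at hlt ⊢
  omega

end YoungDiagram

/-- The Pieri coefficient `c_{μν}` for `ν = μ ∖ {ζ}`. -/
def pieriCoeff (μ : YoungDiagram) (ζ : ℕ × ℕ) : K :=
  (∏ α ∈ μ.cells.filter (fun α => α.1 = ζ.1 ∧ α ≠ ζ),
      (tt ^ (leg μ α) - qq ^ (arm μ α + 1)) / (tt ^ (leg μ α) - qq ^ (arm μ α))) *
    (∏ α ∈ μ.cells.filter (fun α => α.2 = ζ.2 ∧ α ≠ ζ),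
      (qq ^ (arm μ α) - tt ^ (leg μ α + 1)) / (qq ^ (arm μ α) - tt ^ (leg μ α)))

section Pieri

variable {μ : YoungDiagram} {ζ : ℕ × ℕ}

lemma PiMu_eq_prod_cellFactor :
    PiMu μ = ∏ α ∈ μ.cells, cellFactor (leg μ α) (arm μ α) :=
  rfl

lemma PiMuNu_eq_prod :
    PiMuNu μ ζ = cellFactor 0 0 *
      (∏ α ∈ μ.cells.filter (fun α => α.1 ≠ ζ.1 ∧ α.2 ≠ ζ.2), cellFactor (leg μ α) (arm μ α)) *
      (∏ α ∈ μ.cells.filter (fun α => α.1 = ζ.1 ∧ α ≠ ζ), rowFactor (leg μ α) (arm μ α)) *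
      (∏ α ∈ μ.cells.filter (fun α => α.2 = ζ.2 ∧ α ≠ ζ), colFactor (leg μ α) (arm μ α)) := by
  rw [cellFactor_zero_zero]
  rfl

lemma PiMuNu_ne_zero (hζ : IsCornerCell μ ζ) : PiMuNu μ ζ ≠ 0 := by
  rw [PiMuNu_eq_prod]
  refine mul_ne_zero (mul_ne_zero (mul_ne_zero (cellFactor_ne_zero le_rfl le_rfl) ?_) ?_) ?_ <;>
    refine Finset.prod_ne_zero_iff.mpr fun α hα => ?_ <;>
    obtain ⟨hμ, h1, h2⟩ := Finset.mem_filter.mp hα <;>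
    rw [YoungDiagram.mem_cells] at hμ
  · exact cellFactor_ne_zero (leg_nonneg hμ) (arm_nonneg hμ)
  · exact rowFactor_ne_zero (leg_nonneg hμ) (hζ.arm_ne_zero_of_row hμ h1 h2)
  · exact colFactor_ne_zero (hζ.leg_ne_zero_of_col hμ h1 h2) (arm_nonneg hμ)

lemma PiMu_eq_pieriCoeff_mul_PiMuNu (hζ : IsCornerCell μ ζ) :
    PiMu μ = pieriCoeff μ ζ * PiMuNu μ ζ := by
  have hrow : ∏ α ∈ μ.cells.filter (fun α => α.1 = ζ.1 ∧ α ≠ ζ), cellFactor (leg μ α) (arm μ α) =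
      (∏ α ∈ μ.cells.filter (fun α => α.1 = ζ.1 ∧ α ≠ ζ),
        (tt ^ (leg μ α) - qq ^ (arm μ α + 1)) / (tt ^ (leg μ α) - qq ^ (arm μ α))) *
      ∏ α ∈ μ.cells.filter (fun α => α.1 = ζ.1 ∧ α ≠ ζ), rowFactor (leg μ α) (arm μ α) := by
    rw [← Finset.prod_mul_distrib]
    refine Finset.prod_congr rfl fun α hα => ?_
    obtain ⟨hμ, h1, h2⟩ := Finset.mem_filter.mp hα
    exact (div_mul_rowFactor (hζ.arm_ne_zero_of_row ((μ.mem_cells α).mp hμ) h1 h2)).symm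
  have hcol : ∏ α ∈ μ.cells.filter (fun α => α.2 = ζ.2 ∧ α ≠ ζ), cellFactor (leg μ α) (arm μ α) =
      (∏ α ∈ μ.cells.filter (fun α => α.2 = ζ.2 ∧ α ≠ ζ),
        (qq ^ (arm μ α) - tt ^ (leg μ α + 1)) / (qq ^ (arm μ α) - tt ^ (leg μ α))) *
      ∏ α ∈ μ.cells.filter (fun α => α.2 = ζ.2 ∧ α ≠ ζ), colFactor (leg μ α) (arm μ α) := by
    rw [← Finset.prod_mul_distrib]
    refine Finset.prod_congr rfl fun α hα => ?_
    obtain ⟨hμ, h1, h2⟩ := Finset.mem_filter.mp hα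
    exact (div_mul_colFactor (hζ.leg_ne_zero_of_col ((μ.mem_cells α).mp hμ) h1 h2)).symm
  rw [PiMu_eq_prod_cellFactor, Finset.prod_eq_mul_prod_row_mul_prod_col_mul_prod_rest
    ((μ.mem_cells ζ).mpr hζ.1), hζ.2.1, hζ.2.2, hrow, hcol, PiMuNu_eq_prod, pieriCoeff]
  ring

end Pieri

theorem pieri_c_eq_general (μ : YoungDiagram)
    (ζ : ℕ × ℕ) (hζ : IsCornerCell μ ζ) :
    (∏ α ∈ μ.cells.filter (fun α => α.1 = ζ.1 ∧ α ≠ ζ),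
        (tt ^ (leg μ α) - qq ^ (arm μ α + 1)) / (tt ^ (leg μ α) - qq ^ (arm μ α))) *
      (∏ α ∈ μ.cells.filter (fun α => α.2 = ζ.2 ∧ α ≠ ζ),
        (qq ^ (arm μ α) - tt ^ (leg μ α + 1)) / (qq ^ (arm μ α) - tt ^ (leg μ α))) =
      PiMu μ / PiMuNu μ ζ :=
  eq_div_of_mul_eq (PiMuNu_ne_zero hζ) (PiMu_eq_pieriCoeff_mul_PiMuNu hζ).symm

/-- The Pieri coefficient `c_{μν}` equals `Π_μ / Π_{μ,ν}`. -/
theorem pieri_c_eq (n : ℕ) (μ : YoungDiagram) (hμ : μ.card = n)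
    (ζ : ℕ × ℕ) (hζ : IsCornerCell μ ζ) :
    (∏ α ∈ μ.cells.filter (fun α => α.1 = ζ.1 ∧ α ≠ ζ),
        (tt ^ (leg μ α) - qq ^ (arm μ α + 1)) / (tt ^ (leg μ α) - qq ^ (arm μ α))) *
      (∏ α ∈ μ.cells.filter (fun α => α.2 = ζ.2 ∧ α ≠ ζ),
        (qq ^ (arm μ α) - tt ^ (leg μ α + 1)) / (qq ^ (arm μ α) - tt ^ (leg μ α))) =
      PiMu μ / PiMuNu μ ζ :=
  pieri_c_eq_general μ ζ hζ
end
end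

section
/- For every Dyck word a of size n, area(a) = coinv(a) − n(n+1)/2, where coinv(a) = #{(i,j) : 1 ≤ i < j ≤ 2n, a_i < a_j} is the number of coinversions of a. Equivalently, coinv(a) = area(a) + C(n+1,2). -/
open Finset


lemma aux_two_mul_sum_lt {m : ℕ} (s : Finset (Fin m)) :
    2 * ∑ j ∈ s, (s.filter fun k : Fin m => (k : ℕ) < (j : ℕ)).card + s.card
      = s.card * s.card := by
  classical
  have key : ∀ j ∈ s,
      (s.filter fun k : Fin m => (k : ℕ) < (j : ℕ)).card +
        ((s.filter fun k : Fin m => (j : ℕ) < (k : ℕ)).card + 1) = s.card := by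
    intro j hj
    have h1 : (1 : ℕ) = ∑ k ∈ s, if k = j then 1 else 0 := by
      rw [Finset.sum_ite_eq' s j (fun _ => 1)]
      simp [hj]
    rw [Finset.card_filter, Finset.card_filter, h1, ← Finset.sum_add_distrib,
      ← Finset.sum_add_distrib, Finset.card_eq_sum_ones]
    refine Finset.sum_congr rfl fun k hk => ?_
    have : k = j ↔ (k : ℕ) = (j : ℕ) := by simp [Fin.ext_iff]
    split_ifs <;> omega
  have hswap : ∑ j ∈ s, (s.filter fun k : Fin m => (k : ℕ) < (j : ℕ)).card
      = ∑ j ∈ s, (s.filter fun k : Fin m => (j : ℕ) < (k : ℕ)).card := by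
    simp only [Finset.card_filter]
    exact Finset.sum_comm
  have htot : ∑ j ∈ s, ((s.filter fun k : Fin m => (k : ℕ) < (j : ℕ)).card +
      ((s.filter fun k : Fin m => (j : ℕ) < (k : ℕ)).card + 1)) = s.card * s.card := by
    rw [Finset.sum_congr rfl key, Finset.sum_const, smul_eq_mul]
  rw [Finset.sum_add_distrib, Finset.sum_add_distrib, Finset.sum_const, smul_eq_mul,
    mul_one] at htot
  rw [two_mul, hswap]
  linarith [htot]

noncomputable section

/-- A Dyck word of size `n`: a `0/1`-sequence of length `2n` with exactly `n`
zeros (and hence `n` ones) such that every initial segment contains at least as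
many `0`'s as `1`'s. -/
def IsDyckWord (n : ℕ) (a : Fin (2 * n) → ℕ) : Prop :=
  (∀ i, a i ≤ 1) ∧
  (univ.filter (fun i : Fin (2 * n) => a i = 0)).card = n ∧
  (univ.filter (fun i : Fin (2 * n) => a i = 1)).card = n ∧
  ∀ m : ℕ,
    (univ.filter (fun i : Fin (2 * n) => (i : ℕ) < m ∧ a i = 1)).card ≤
      (univ.filter (fun i : Fin (2 * n) => (i : ℕ) < m ∧ a i = 0)).card

/-- The area statistic `area(a) = Σ_{i=1}^n (i - 1 - r_i(a))`: if `j` is the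
position of the `i`-th `0`, then `i - 1` is the number of `0`'s before `j` and
`r_i(a)` is the number of `1`'s before `j`. -/
def dyckArea (n : ℕ) (a : Fin (2 * n) → ℕ) : ℕ :=
  ∑ j ∈ univ.filter (fun j : Fin (2 * n) => a j = 0),
    ((univ.filter (fun k : Fin (2 * n) => (k : ℕ) < (j : ℕ) ∧ a k = 0)).card -
      (univ.filter (fun k : Fin (2 * n) => (k : ℕ) < (j : ℕ) ∧ a k = 1)).card)

/-- The number of coinversions `coinv(a) = #{(i,j) : i < j, a_i < a_j}`. -/
def dyckCoinv (n : ℕ) (a : Fin (2 * n) → ℕ) : ℕ :=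
  (univ.filter (fun p : Fin (2 * n) × Fin (2 * n) => p.1 < p.2 ∧ a p.1 < a p.2)).card

/-- For every Dyck word `a` of size `n`, `area(a) = coinv(a) - n(n+1)/2`;
equivalently `coinv(a) = area(a) + C(n+1,2)`. -/
theorem dyck_area_eq_coinv_sub (n : ℕ) (a : Fin (2 * n) → ℕ) (ha : IsDyckWord n a) :
    dyckArea n a = dyckCoinv n a - Nat.choose (n + 1) 2 ∧
    dyckCoinv n a = dyckArea n a + Nat.choose (n + 1) 2 := by
  classical
  obtain ⟨hle, hS, hT, hbal⟩ := ha
  set S := univ.filter (fun i : Fin (2 * n) => a i = 0) with hSdef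
  set T := univ.filter (fun i : Fin (2 * n) => a i = 1) with hTdef
  have hf : ∀ j : Fin (2 * n),
      (univ.filter fun k : Fin (2 * n) => (k : ℕ) < (j : ℕ) ∧ a k = 0)
        = S.filter fun k : Fin (2 * n) => (k : ℕ) < (j : ℕ) := by
    intro j; ext k; simp [hSdef, and_comm]
  have hg : ∀ j : Fin (2 * n),
      (univ.filter fun k : Fin (2 * n) => (k : ℕ) < (j : ℕ) ∧ a k = 1)
        = T.filter fun k : Fin (2 * n) => (k : ℕ) < (j : ℕ) := by
    intro j; ext k; simp [hTdef, and_comm]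
  set F := ∑ j ∈ S, (S.filter fun k : Fin (2 * n) => (k : ℕ) < (j : ℕ)).card with hFdef
  set G := ∑ j ∈ S, (T.filter fun k : Fin (2 * n) => (k : ℕ) < (j : ℕ)).card with hGdef
  -- area + G = F
  have harea : dyckArea n a + G = F := by
    unfold dyckArea
    simp only [hf, hg]
    rw [hGdef, hFdef, ← Finset.sum_add_distrib]
    refine Finset.sum_congr rfl fun j hj => ?_
    have hb := hbal (j : ℕ)
    rw [hf j, hg j] at hb
    exact Nat.sub_add_cancel hb
  -- 2F + n = n*n
  have h2 : 2 * F + n = n * n := by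
    have := aux_two_mul_sum_lt S
    rw [hS] at this
    rw [hFdef]
    exact this
  -- coinv + G = n*n
  have hco : dyckCoinv n a = ∑ j ∈ S, ∑ k ∈ T, if (j : ℕ) < (k : ℕ) then 1 else 0 := by
    unfold dyckCoinv
    have hset : (univ.filter fun p : Fin (2 * n) × Fin (2 * n) => p.1 < p.2 ∧ a p.1 < a p.2)
        = (S ×ˢ T).filter fun p : Fin (2 * n) × Fin (2 * n) => (p.1 : ℕ) < (p.2 : ℕ) := by
      ext p
      simp only [Finset.mem_filter, Finset.mem_univ, true_and, Finset.mem_product,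
        hSdef, hTdef, Fin.lt_def]
      have h1 := hle p.1
      have h2 := hle p.2
      constructor
      · rintro ⟨hlt, hv⟩; exact ⟨⟨by omega, by omega⟩, hlt⟩
      · rintro ⟨⟨hv1, hv2⟩, hlt⟩; exact ⟨hlt, by omega⟩
    rw [hset, Finset.card_filter, Finset.sum_product]
  have hGsum : G = ∑ j ∈ S, ∑ k ∈ T, if (k : ℕ) < (j : ℕ) then 1 else 0 := by
    rw [hGdef]
    simp only [Finset.card_filter]
  have h3 : dyckCoinv n a + G = n * n := by
    rw [hco, hGsum, ← Finset.sum_add_distrib]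
    have : ∀ j ∈ S, ((∑ k ∈ T, if (j : ℕ) < (k : ℕ) then 1 else 0) +
        ∑ k ∈ T, if (k : ℕ) < (j : ℕ) then 1 else 0) = n := by
      intro j hj
      rw [← Finset.sum_add_distrib]
      have hjS : a j = 0 := by
        have := hj; rw [hSdef] at this; simpa using this
      have : ∀ k ∈ T, ((if (j : ℕ) < (k : ℕ) then 1 else 0) +
          if (k : ℕ) < (j : ℕ) then 1 else 0) = 1 := by
        intro k hk
        have hkT : a k = 1 := by
          have := hk; rw [hTdef] at this; simpa using this
        have hne : (j : ℕ) ≠ (k : ℕ) := by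
          intro h
          have : j = k := Fin.ext h
          rw [this, hkT] at hjS; exact absurd hjS one_ne_zero
        split_ifs <;> omega
      rw [Finset.sum_congr rfl this, Finset.sum_const, smul_eq_mul, mul_one, hT]
    rw [Finset.sum_congr rfl this, Finset.sum_const, smul_eq_mul, hS]
  -- 2 * C(n+1,2) = n*n + n
  have h4 : 2 * Nat.choose (n + 1) 2 = n * n + n := by
    rw [Nat.choose_two_right]
    simp only [Nat.add_sub_cancel]
    have hdvd : 2 ∣ (n + 1) * n := by
      rw [mul_comm]
      exact (Nat.even_mul_succ_self n).two_dvd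
    rw [Nat.mul_div_cancel' hdvd]
    ring
  have main : dyckCoinv n a = dyckArea n a + Nat.choose (n + 1) 2 := by
    generalize hnn : n * n = N at h2 h3 h4
    omega
  exact ⟨by omega, main⟩
end
end
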